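/- A 2-step memory scheme separates the hypotheses even against an adaptive adversary: In the erasure example with transmitter input pair P_{X_1X_2}(0,0) = P_{X_1X_2}(1,1) = 1/2, let the adversary under H1 choose a pair (s̄,σ) where s̄ ∈ {0,1} is the first-letter state and σ : {0,1,e} → {0,1} selects the second-letter state as a function of the first output, inducing W̄²((y_1,y_2)|(x_1,x_2),(s̄,σ)) = W̄(y_1|x_1,s̄)·W̄(y_2|x_2,σ(y_1)). Then for p ∈ (0,1), r ∈ (0,1) and any distribution P_{S̄,σ} on {0,1} × {0,1,e}→{0,1}, the induced double-letter output distribution Q̄_{Y_1Y_2} differs from the H0 double-letter output distribution Q_{Y_1Y_2}: matching the Y_1-marginal forces P_{S̄} to be uniform, and then Q̄_{Y_1Y_2}(0,1) > 0 = Q_{Y_1Y_2}(0,1). Hence the sets of double-letter output distributions under H0 and H1 (with feedback-adaptive adversary) are disjoint. -/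

import Mathlib

open Finset

/-- `p` is a probability mass function. -/
def IsDist {Z : Type*} [Fintype Z] (p : Z → ℝ) : Prop :=
  (∀ z, 0 ≤ p z) ∧ ∑ z, p z = 1

/-- The output alphabet `{0, 1, e}` of the erasure example. -/
inductive Out : Type
  | o0 | o1 | oe
deriving DecidableEq

instance : Fintype Out where
  elems := {Out.o0, Out.o1, Out.oe}
  complete := by intro x; cases x <;> simp

/-- The binary erasure channel `BEC(p)`: `W(x|x) = 1-p`, `W(e|x) = p`
(inputs `false = 0`, `true = 1`). -/
noncomputable def Wbec (p : ℝ) : Bool → Out → ℝ :=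
  fun x y =>
    match x, y with
    | false, Out.o0 => 1 - p
    | false, Out.o1 => 0
    | false, Out.oe => p
    | true,  Out.o0 => 0
    | true,  Out.o1 => 1 - p
    | true,  Out.oe => p

/-- The state-dependent channel `W̄(·|·,s̄)` of the erasure example (states
`false = 0`, `true = 1`): `W̄(·|·,0)` transmits input `1` cleanly (up to erasure) and
flips input `0` to `1` with probability `(1-p)r`; `W̄(·|·,1)` is symmetric. -/
noncomputable def WbarEx (p r : ℝ) : Bool → Bool → Out → ℝ :=
  fun x s y =>
    match x, s, y with
    | false, false, Out.o0 => (1 - p) * (1 - r)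
    | false, false, Out.o1 => (1 - p) * r
    | false, false, Out.oe => p
    | true,  false, Out.o0 => 0
    | true,  false, Out.o1 => 1 - p
    | true,  false, Out.oe => p
    | false, true,  Out.o0 => 1 - p
    | false, true,  Out.o1 => 0
    | false, true,  Out.oe => p
    | true,  true,  Out.o0 => (1 - p) * r
    | true,  true,  Out.o1 => (1 - p) * (1 - r)
    | true,  true,  Out.oe => p

/-- The double-letter output distribution under `H0` when the transmitter sends the pair
`(X₁,X₂)` with `P(0,0) = P(1,1) = 1/2`. -/
noncomputable def Q2 (p : ℝ) (y : Out × Out) : ℝ :=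
  ∑ x : Bool, (1/2 : ℝ) * Wbec p x y.1 * Wbec p x y.2

/-- The double-letter output distribution under `H1` when the feedback-adaptive adversary
chooses a pair `(s̄, σ)` -- a first-letter state `s̄` and a map `σ` selecting the
second-letter state as a function of the first output -- according to `P`. -/
noncomputable def Qbar2ad (p r : ℝ) (P : Bool × (Out → Bool) → ℝ) (y : Out × Out) : ℝ :=
  ∑ x : Bool, (1/2 : ℝ) *
    ∑ g : Bool × (Out → Bool), P g * WbarEx p r x g.1 y.1 * WbarEx p r x (g.2 y.1) y.2

/-!
Summing out `Y₂` removes the adaptive map `σ`, so the `Y₁`-marginal of `Q̄` depends only on the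
law `(a, b)` of the first state. Its value at `Y₁ = 0` is `(1-p)/2 · (a(1-r) + b(1+r))`, which
equals the `H0` value `(1-p)/2` only if `a = b = 1/2`. With state `1` having positive probability,
input `(1,1)` yields the output `(0,1)` with positive probability, `(1-p)r` for the first letter
and at least `(1-p)(1-r)` for the second whatever `σ(0)` is; under `H0` a first output `0`
forces the second output to be `0` or `e`.
-/

theorem Out.sum_univ {M : Type*} [AddCommMonoid M] (f : Out → M) :
    ∑ y, f y = f .o0 + f .o1 + f .oe := by
  rw [show (univ : Finset Out) = {.o0, .o1, .oe} from rfl, sum_insert (by decide),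
    sum_pair (by decide), add_assoc]

section ErasureExample

variable {p r : ℝ}

theorem WbarEx_nonneg (hp : p ∈ Set.Icc (0:ℝ) 1) (hr : r ∈ Set.Icc (0:ℝ) 1)
    (x s : Bool) (y : Out) : 0 ≤ WbarEx p r x s y := by
  obtain ⟨hp0, hp1⟩ := hp
  obtain ⟨hr0, hr1⟩ := hr
  cases x <;> cases s <;> cases y <;> simp only [WbarEx] <;> nlinarith

theorem WbarEx_true_o1_pos (hp : p < 1) (hr : r < 1) (s : Bool) :
    0 < WbarEx p r true s .o1 := by
  cases s <;> simp only [WbarEx] <;> nlinarith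

theorem sum_WbarEx (p r : ℝ) (x s : Bool) : ∑ y, WbarEx p r x s y = 1 := by
  rw [Out.sum_univ]
  cases x <;> cases s <;> simp only [WbarEx] <;> ring

/-- The law `P_{S̄}` of the adversary's first-letter state. -/
noncomputable def firstStateLaw (P : Bool × (Out → Bool) → ℝ) (s : Bool) : ℝ :=
  ∑ σ : Out → Bool, P (s, σ)

theorem sum_filter_fst_eq_firstStateLaw (P : Bool × (Out → Bool) → ℝ) (s : Bool) :
    ∑ g ∈ univ.filter (fun g : Bool × (Out → Bool) => g.1 = s), P g = firstStateLaw P s := by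
  rw [sum_filter, Fintype.sum_prod_type, Fintype.sum_bool]
  cases s <;> simp [firstStateLaw]

theorem firstStateLaw_add {P : Bool × (Out → Bool) → ℝ} (hP : IsDist P) :
    firstStateLaw P false + firstStateLaw P true = 1 := by
  rw [← hP.2, Fintype.sum_prod_type, Fintype.sum_bool, add_comm]
  rfl

theorem sum_mul_fst (P : Bool × (Out → Bool) → ℝ) (c : Bool → ℝ) :
    ∑ g : Bool × (Out → Bool), P g * c g.1 =
      firstStateLaw P false * c false + firstStateLaw P true * c true := by
  rw [Fintype.sum_prod_type, Fintype.sum_bool, add_comm]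
  simp only [firstStateLaw, sum_mul]

theorem sum_Qbar2ad_fst (p r : ℝ) (P : Bool × (Out → Bool) → ℝ) (y₁ : Out) :
    ∑ y₂, Qbar2ad p r P (y₁, y₂) =
      ∑ x : Bool, (1/2 : ℝ) * ∑ g : Bool × (Out → Bool), P g * WbarEx p r x g.1 y₁ := by
  simp only [Qbar2ad]
  rw [sum_comm]
  refine sum_congr rfl fun x _ => ?_
  rw [← mul_sum, sum_comm]
  congr 1
  refine sum_congr rfl fun g _ => ?_
  rw [← mul_sum, sum_WbarEx, mul_one]

theorem sum_Qbar2ad_o0 (p r : ℝ) (P : Bool × (Out → Bool) → ℝ) :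
    ∑ y₂, Qbar2ad p r P (.o0, y₂) =
      (1 - p) / 2 * (firstStateLaw P false * (1 - r) + firstStateLaw P true * (1 + r)) := by
  rw [sum_Qbar2ad_fst, Fintype.sum_bool, sum_mul_fst P (WbarEx p r true · .o0),
    sum_mul_fst P (WbarEx p r false · .o0)]
  simp only [WbarEx]
  ring

theorem sum_Q2_o0 (p : ℝ) : ∑ y₂, Q2 p (.o0, y₂) = (1 - p) / 2 := by
  simp only [Out.sum_univ, Q2, Fintype.sum_bool, Wbec]
  ring

theorem Q2_o0_o1 (p : ℝ) : Q2 p (.o0, .o1) = 0 := by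
  simp [Q2, Wbec]

theorem firstStateLaw_eq_half_of_sum_Qbar2ad_o0 (hp : p < 1) (hr : 0 < r)
    {P : Bool × (Out → Bool) → ℝ} (hP : IsDist P)
    (hmarg : ∑ y₂, Qbar2ad p r P (.o0, y₂) = ∑ y₂, Q2 p (.o0, y₂)) (s : Bool) :
    firstStateLaw P s = 1/2 := by
  have hsum := firstStateLaw_add hP
  rw [sum_Qbar2ad_o0, sum_Q2_o0] at hmarg
  have hlin : firstStateLaw P false * (1 - r) + firstStateLaw P true * (1 + r) = 1 := by
    have h1p : (1 - p) / 2 ≠ 0 := by linarith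
    exact mul_left_cancel₀ h1p (hmarg.trans (mul_one _).symm)
  have hdiff : r * (firstStateLaw P true - firstStateLaw P false) = 0 := by
    linear_combination hlin - hsum
  have heq := sub_eq_zero.mp ((mul_eq_zero.mp hdiff).resolve_left hr.ne')
  cases s <;> linarith

theorem Qbar2ad_o0_o1_pos (hp : p ∈ Set.Ioo (0:ℝ) 1) (hr : r ∈ Set.Ioo (0:ℝ) 1)
    {P : Bool × (Out → Bool) → ℝ} (hP : IsDist P) (htrue : 0 < firstStateLaw P true) :
    0 < Qbar2ad p r P (.o0, .o1) := by
  obtain ⟨σ, -, hσ⟩ := exists_lt_of_sum_lt (s := univ) (f := fun _ => (0:ℝ))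
    (by simpa [firstStateLaw] using htrue)
  have hterm_nonneg (x : Bool) (g : Bool × (Out → Bool)) :
      0 ≤ P g * WbarEx p r x g.1 .o0 * WbarEx p r x (g.2 .o0) .o1 := by
    have hWbar := WbarEx_nonneg (p := p) (r := r) (Set.Ioo_subset_Icc_self hp)
      (Set.Ioo_subset_Icc_self hr)
    exact mul_nonneg (mul_nonneg (hP.1 g) (hWbar _ _ _)) (hWbar _ _ _)
  have hterm_pos : 0 < P (true, σ) * WbarEx p r true true .o0 * WbarEx p r true (σ .o0) .o1 :=
    mul_pos (mul_pos hσ (by simp only [WbarEx]; nlinarith [hp.2, hr.1]))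
      (WbarEx_true_o1_pos hp.2 hr.2 _)
  refine sum_pos' (fun x _ => mul_nonneg (by norm_num)
    (sum_nonneg fun g _ => hterm_nonneg x g)) ⟨true, mem_univ _, ?_⟩
  exact mul_pos (by norm_num) (sum_pos' (fun g _ => hterm_nonneg true g)
    ⟨(true, σ), mem_univ _, hterm_pos⟩)

end ErasureExample

/-- A 2-step memory scheme separates the hypotheses even against an adaptive adversary:
for every distribution `P_{S̄,σ}` on adaptive strategies, the induced double-letter
output distribution under `H1` differs from the one under `H0`; specifically, matching
the `Y₁`-marginal forces `P_{S̄}` to be uniform, and then `Q̄(0,1) > 0 = Q(0,1)`.  Hence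
the sets of double-letter output distributions under the two hypotheses are disjoint. -/
theorem two_step_memory_separates_adaptive
    (p r : ℝ) (hp : p ∈ Set.Ioo (0:ℝ) 1) (hr : r ∈ Set.Ioo (0:ℝ) 1) :
    (∀ P : Bool × (Out → Bool) → ℝ, IsDist P → Qbar2ad p r P ≠ Q2 p) ∧
    Q2 p (Out.o0, Out.o1) = 0 ∧
    (∀ P : Bool × (Out → Bool) → ℝ, IsDist P →
      (∀ y1 : Out, (∑ y2, Qbar2ad p r P (y1, y2)) = ∑ y2, Q2 p (y1, y2)) →
        (∑ g ∈ Finset.univ.filter (fun g : Bool × (Out → Bool) => g.1 = false), P g)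
            = 1/2 ∧
          0 < Qbar2ad p r P (Out.o0, Out.o1)) := by
  have hmatch : ∀ P : Bool × (Out → Bool) → ℝ, IsDist P →
      (∀ y1 : Out, (∑ y2, Qbar2ad p r P (y1, y2)) = ∑ y2, Q2 p (y1, y2)) →
        (∑ g ∈ Finset.univ.filter (fun g : Bool × (Out → Bool) => g.1 = false), P g)
            = 1/2 ∧
          0 < Qbar2ad p r P (Out.o0, Out.o1) := by
    intro P hP hmarg
    have hhalf := firstStateLaw_eq_half_of_sum_Qbar2ad_o0 hp.2 hr.1 hP (hmarg .o0)
    refine ⟨(sum_filter_fst_eq_firstStateLaw P false).trans (hhalf false), ?_⟩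
    exact Qbar2ad_o0_o1_pos hp hr hP (by rw [hhalf true]; norm_num)
  refine ⟨fun P hP hQ => ?_, Q2_o0_o1 p, hmatch⟩
  have hpos := (hmatch P hP fun y₁ => by rw [hQ]).2
  rw [hQ, Q2_o0_o1] at hpos
  exact hpos.false
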